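/- Stein's lemma for Gaussian smoothing: Let σ > 0 and let F : ℝᵈ → ℝ be a bounded measurable function. Define G(x) = E_{δ ~ N(0, σ² I_d)}[F(x + δ)]. Then G is differentiable and for every x ∈ ℝᵈ, ∇G(x) = E_{δ ~ N(0, σ² I_d)}[(δ/σ²) · F(x + δ)]. -/

import Mathlib

open MeasureTheory Real

/-- The `d`-dimensional isotropic Gaussian measure `N(0, σ² I_d)`, with density
`(2πσ²)^{-d/2} exp(-‖t‖²/(2σ²))` with respect to Lebesgue measure. -/
noncomputable def isoGaussian (d : ℕ) (σ : ℝ) : Measure (EuclideanSpace ℝ (Fin d)) :=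
  volume.withDensity fun t =>
    ENNReal.ofReal ((2 * π * σ ^ 2) ^ (-(d : ℝ) / 2) * Real.exp (-‖t‖ ^ 2 / (2 * σ ^ 2)))

/-!
After the substitution `y = x + δ`, `G x = c ∫ F y exp (-b ‖y - x‖²) dy` with `b = 1 / (2σ²)`:
the translation moves the dependence on `x` from the rough `F` onto the smooth kernel, whose
gradient in `x` is `2b (y - x) exp (-b ‖y - x‖²)`. Differentiation under the integral sign is
justified by domination: for `‖x - x₀‖ ≤ 1` we have `‖y - x₀‖² ≤ 2 ‖y - x‖² + 2`, so the
differentiated integrand is bounded by a multiple of `(‖y - x₀‖ + 1) exp (-(b/2) ‖y - x₀‖²)`.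
-/

lemma exp_neg_mul_sq_norm_mul_norm_le {E : Type*} [SeminormedAddCommGroup E]
    {b : ℝ} (hb : 0 ≤ b) {u v : E} (h : ‖u - v‖ ≤ 1) :
    exp (-b * ‖u‖ ^ 2) * ‖u‖ ≤ exp b * ((‖v‖ + 1) * exp (-(b / 2) * ‖v‖ ^ 2)) := by
  have hu : ‖u‖ ≤ ‖v‖ + 1 := by linarith [norm_le_norm_add_norm_sub' u v]
  have hv : ‖v‖ ≤ ‖u‖ + 1 := by linarith [norm_le_norm_add_norm_sub u v]
  have hsq : ‖v‖ ^ 2 ≤ 2 * ‖u‖ ^ 2 + 2 := by nlinarith [norm_nonneg v, sq_nonneg (‖u‖ - 1)]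
  have hexp : exp (-b * ‖u‖ ^ 2) ≤ exp b * exp (-(b / 2) * ‖v‖ ^ 2) := by
    rw [← exp_add, exp_le_exp]
    nlinarith
  calc exp (-b * ‖u‖ ^ 2) * ‖u‖ ≤ exp b * exp (-(b / 2) * ‖v‖ ^ 2) * (‖v‖ + 1) := by gcongr
    _ = exp b * ((‖v‖ + 1) * exp (-(b / 2) * ‖v‖ ^ 2)) := by ring

lemma add_one_mul_exp_neg_mul_sq_le {b : ℝ} (hb : 0 < b) (r : ℝ) :
    (r + 1) * exp (-b * r ^ 2) ≤ 2 * exp (-b * r ^ 2) + 2 / b * exp (-(b / 2) * r ^ 2) := by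
  have hr : r ^ 2 ≤ 2 / b * exp (b / 2 * r ^ 2) := by
    rw [div_mul_eq_mul_div, le_div_iff₀ hb]
    nlinarith [add_one_le_exp (b / 2 * r ^ 2)]
  have hsplit : exp (-(b / 2) * r ^ 2) = exp (b / 2 * r ^ 2) * exp (-b * r ^ 2) := by
    rw [← exp_add]; ring_nf
  rw [hsplit]
  nlinarith [exp_pos (-b * r ^ 2), sq_nonneg (r - 1)]

section GaussianKernel

variable {E : Type*} [NormedAddCommGroup E] [InnerProductSpace ℝ E]

lemma hasFDerivAt_exp_neg_mul_sq_norm_sub (b : ℝ) (y z : E) :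
    HasFDerivAt (fun z => exp (-b * ‖y - z‖ ^ 2))
      (innerSL ℝ ((2 * b * exp (-b * ‖y - z‖ ^ 2)) • (y - z))) z := by
  have h := ((((hasFDerivAt_id z).const_sub y).norm_sq).const_mul (-b)).exp
  refine h.congr_fderiv (ContinuousLinearMap.ext fun v => ?_)
  simp only [id_eq, neg_mul, ContinuousLinearMap.comp_neg, ContinuousLinearMap.comp_id,
    neg_smul, smul_neg, neg_apply, smul_apply, coe_innerSL_apply, nsmul_eq_mul, smul_eq_mul,
    map_smul]
  ring

variable [FiniteDimensional ℝ E] [MeasurableSpace E] [BorelSpace E] {b : ℝ}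

lemma integrable_exp_neg_mul_sq_norm (hb : 0 < b) :
    Integrable fun t : E => exp (-b * ‖t‖ ^ 2) := by
  have h := (GaussianFourier.integrable_cexp_neg_mul_sq_norm_add (V := E) (b := b)
    (by simpa using hb) 0 0).norm
  refine h.congr (.of_forall fun t => ?_)
  simp only [zero_mul, add_zero, Complex.norm_exp]
  norm_cast

lemma integrable_norm_add_one_mul_exp_neg_mul_sq_norm (hb : 0 < b) :
    Integrable fun t : E => (‖t‖ + 1) * exp (-b * ‖t‖ ^ 2) := by
  refine (((integrable_exp_neg_mul_sq_norm hb).const_mul 2).add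
    ((integrable_exp_neg_mul_sq_norm (half_pos hb)).const_mul (2 / b))).mono' (by fun_prop)
    (.of_forall fun t => ?_)
  rw [Real.norm_of_nonneg (by positivity)]
  exact add_one_mul_exp_neg_mul_sq_le hb ‖t‖

theorem hasGradientAt_integral_exp_neg_mul_sq_norm_sub_mul {F : E → ℝ}
    (hF : AEStronglyMeasurable F) {C : ℝ} (hC : ∀ y, ‖F y‖ ≤ C) (hb : 0 < b) (x : E) :
    HasGradientAt (fun x => ∫ y, exp (-b * ‖y - x‖ ^ 2) * F y)
      (∫ y, (2 * b * exp (-b * ‖y - x‖ ^ 2) * F y) • (y - x)) x := by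
  set w : E → E → E := fun z y => (2 * b * exp (-b * ‖y - z‖ ^ 2) * F y) • (y - z)
  set bound : E → ℝ := fun y => 2 * b * exp b * C * ((‖y - x‖ + 1) * exp (-(b / 2) * ‖y - x‖ ^ 2))
  have hderiv (y z : E) :
      HasFDerivAt (fun z => exp (-b * ‖y - z‖ ^ 2) * F y) (innerSL ℝ (w z y)) z := by
    refine ((hasFDerivAt_exp_neg_mul_sq_norm_sub b y z).mul_const (F y)).congr_fderiv ?_
    rw [← map_smul, smul_smul, mul_comm (F y)]
  have hw_le (y : E) {z : E} (hz : z ∈ Metric.ball x 1) : ‖w z y‖ ≤ bound y := by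
    have hxz : ‖(y - z) - (y - x)‖ ≤ 1 := by
      rw [sub_sub_sub_cancel_left, ← dist_eq_norm]
      exact (Metric.mem_ball'.mp hz).le
    have hC0 : 0 ≤ C := (norm_nonneg _).trans (hC y)
    calc ‖w z y‖ = 2 * b * ‖F y‖ * (exp (-b * ‖y - z‖ ^ 2) * ‖y - z‖) := by
          simp only [w, norm_smul, norm_mul, Real.norm_of_nonneg hb.le, Real.norm_two,
            Real.norm_of_nonneg (exp_pos _).le]
          ring
      _ ≤ 2 * b * C * (exp b * ((‖y - x‖ + 1) * exp (-(b / 2) * ‖y - x‖ ^ 2))) := by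
          gcongr 2 * b * ?_ * ?_
          exacts [hC y, exp_neg_mul_sq_norm_mul_norm_le hb.le hxz]
      _ = bound y := by ring
  have hbound_int : Integrable bound :=
    ((integrable_norm_add_one_mul_exp_neg_mul_sq_norm (half_pos hb)).comp_sub_right
      x).const_mul _
  have hw_meas : AEStronglyMeasurable (w x) := by
    simp only [w]
    fun_prop
  have hw_int : Integrable (w x) :=
    hbound_int.mono' hw_meas (.of_forall fun y => hw_le y (Metric.mem_ball_self one_pos))
  have hint : Integrable fun y => exp (-b * ‖y - x‖ ^ 2) * F y :=
    ((integrable_exp_neg_mul_sq_norm hb).comp_sub_right x).mul_bdd hF (.of_forall hC)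
  have key := hasFDerivAt_integral_of_dominated_of_fderiv_le (F' := fun z y => innerSL ℝ (w z y))
    (Metric.ball_mem_nhds x one_pos) (.of_forall fun z => by fun_prop) hint
    ((innerSL ℝ).continuous.comp_aestronglyMeasurable hw_meas)
    (.of_forall fun y z hz => by simpa using hw_le y hz) hbound_int
    (.of_forall fun y z _ => hderiv y z)
  rw [ContinuousLinearMap.integral_comp_comm _ hw_int] at key
  exact hasGradientAt_iff_hasFDerivAt.mpr key

end GaussianKernel

lemma integral_isoGaussian {V : Type*} [NormedAddCommGroup V] [NormedSpace ℝ V]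
    (d : ℕ) (σ : ℝ) (g : EuclideanSpace ℝ (Fin d) → V) (x : EuclideanSpace ℝ (Fin d)) :
    ∫ δ, g δ ∂isoGaussian d σ =
      ∫ y, ((2 * π * σ ^ 2) ^ (-(d : ℝ) / 2) * exp (-(2 * σ ^ 2)⁻¹ * ‖y - x‖ ^ 2)) • g (y - x) := by
  conv_rhs => rw [← integral_add_left_eq_self _ x]
  rw [isoGaussian, integral_withDensity_eq_integral_toReal_smul (by fun_prop)
    (.of_forall fun _ => ENNReal.ofReal_lt_top)]
  refine integral_congr_ae (.of_forall fun δ => ?_)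
  beta_reduce
  rw [ENNReal.toReal_ofReal (by positivity), add_sub_cancel_left]
  congr 3
  ring

/-- Stein's lemma for Gaussian smoothing: for `σ > 0` and a bounded
measurable `F : ℝᵈ → ℝ`, the smoothed function `G(x) = E_{δ ~ N(0,σ²I_d)}[F(x + δ)]`
is differentiable with gradient `∇G(x) = E_{δ ~ N(0,σ²I_d)}[(δ/σ²) F(x + δ)]`. -/
theorem stein_lemma_gaussian_smoothing (d : ℕ) (σ : ℝ) (hσ : 0 < σ)
    (F : EuclideanSpace ℝ (Fin d) → ℝ) (hF : Measurable F)
    (hFbd : ∃ C : ℝ, ∀ x, |F x| ≤ C)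
    (G : EuclideanSpace ℝ (Fin d) → ℝ)
    (hG : ∀ x, G x = ∫ δ, F (x + δ) ∂(isoGaussian d σ)) :
    ∀ x : EuclideanSpace ℝ (Fin d),
      HasGradientAt G (∫ δ, F (x + δ) • ((σ ^ 2)⁻¹ • δ) ∂(isoGaussian d σ)) x := by
  obtain ⟨C, hC⟩ := hFbd
  intro x
  set c := (2 * π * σ ^ 2) ^ (-(d : ℝ) / 2)
  set b := (2 * σ ^ 2)⁻¹
  have hG_eq : G = fun x => ∫ y, exp (-b * ‖y - x‖ ^ 2) * (c * F y) := by
    funext x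
    rw [hG, integral_isoGaussian d σ _ x]
    congr 1 with y
    rw [add_sub_cancel, smul_eq_mul]
    ring
  have hgrad_eq : ∫ δ, F (x + δ) • ((σ ^ 2)⁻¹ • δ) ∂isoGaussian d σ =
      ∫ y, (2 * b * exp (-b * ‖y - x‖ ^ 2) * (c * F y)) • (y - x) := by
    rw [integral_isoGaussian d σ _ x]
    congr 1
    funext y
    rw [add_sub_cancel, smul_smul, smul_smul]
    congr 1
    simp only [b, c]
    field_simp
  rw [hG_eq, hgrad_eq]
  refine hasGradientAt_integral_exp_neg_mul_sq_norm_sub_mul (hF.aestronglyMeasurable.const_mul c)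
    (C := |c| * C) (fun y => ?_) (by positivity) x
  rw [norm_mul, Real.norm_eq_abs, Real.norm_eq_abs]
  exact mul_le_mul_of_nonneg_left (hC y) (abs_nonneg c)
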